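/- arXiv:1708.04464 — 3 statements merged into one kernel-verified Lean document; each statement's English description precedes it below -/
import Mathlib

section
/- For every t ∈ ℝ, the matrix u⁻ = u⁻(2) = [[1,0,0],[2,1,0],[2,2,1]] maps the ℤ-module Λ_t = span_ℤ{e₁ + t e₂, e₂ + 2t e₃} onto Λ_{t+1}: that is, u⁻ · Λ_t = span_ℤ{e₁ + (t+1) e₂, e₂ + 2(t+1) e₃} as subgroups of ℝ³. -/
noncomputable def e (i : Fin 3) : Fin 3 → ℝ := Pi.single i 1

/-- the 2-lattice `Λ_t = span_ℤ{e₁ + t e₂, e₂ + 2t e₃}`. -/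
noncomputable def Lam (t : ℝ) : Submodule ℤ (Fin 3 → ℝ) :=
  Submodule.span ℤ {e 0 + t • e 1, e 1 + (2 * t) • e 2}

noncomputable def uMinusTwo : Matrix (Fin 3) (Fin 3) ℝ := !![1, 0, 0; 2, 1, 0; 2, 2, 1]

theorem uMinus_maps_Lam_t_to_Lam_t_add_one (t : ℝ) :
    Submodule.map ((Matrix.mulVecLin uMinusTwo).restrictScalars ℤ) (Lam t) = Lam (t + 1) := by
  have h1 : uMinusTwo.mulVecLin (e 0 + t • e 1)
      = (e 0 + (t + 1) • e 1) + (e 1 + (2 * (t + 1)) • e 2) := by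
    funext i
    fin_cases i <;>
      simp [e, uMinusTwo, Matrix.mulVecLin, Matrix.mulVec, dotProduct,
        Fin.sum_univ_three, Pi.single_apply] <;> ring
  have h2 : uMinusTwo.mulVecLin (e 1 + (2 * t) • e 2)
      = e 1 + (2 * (t + 1)) • e 2 := by
    funext i
    fin_cases i <;>
      simp [e, uMinusTwo, Matrix.mulVecLin, Matrix.mulVec, dotProduct,
        Fin.sum_univ_three, Pi.single_apply] <;> ring
  unfold Lam
  rw [Submodule.map_span]
  apply le_antisymm
  · rw [Submodule.span_le]
    rintro x ⟨y, hy, rfl⟩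
    rcases hy with rfl | rfl
    · show uMinusTwo.mulVecLin _ ∈ _
      rw [h1]
      exact Submodule.add_mem _
        (Submodule.subset_span (Set.mem_insert _ _))
        (Submodule.subset_span (Set.mem_insert_of_mem _ rfl))
    · show uMinusTwo.mulVecLin _ ∈ _
      rw [h2]
      exact Submodule.subset_span (Set.mem_insert_of_mem _ rfl)
  · rw [Submodule.span_le]
    rintro x (rfl | rfl)
    · have hm1 : (e 0 + (t + 1) • e 1) + (e 1 + (2 * (t + 1)) • e 2) ∈
          Submodule.span ℤ (((Matrix.mulVecLin uMinusTwo).restrictScalars ℤ) ''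
            {e 0 + t • e 1, e 1 + (2 * t) • e 2}) := by
        rw [← h1]
        exact Submodule.subset_span ⟨_, Set.mem_insert _ _, rfl⟩
      have hm2 : (e 1 + (2 * (t + 1)) • e 2) ∈
          Submodule.span ℤ (((Matrix.mulVecLin uMinusTwo).restrictScalars ℤ) ''
            {e 0 + t • e 1, e 1 + (2 * t) • e 2}) := by
        rw [← h2]
        exact Submodule.subset_span ⟨_, Set.mem_insert_of_mem _ rfl, rfl⟩
      have := Submodule.sub_mem _ hm1 hm2
      simpa using this
    · rw [← h2]
      exact Submodule.subset_span ⟨_, Set.mem_insert_of_mem _ rfl, rfl⟩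
end

section
/- Let (Ω, η) be a probability space and f : Ω → (0, ∞) a measurable function. Suppose there are constants δ₀ > 0, I₀ < ∞, L₀ > 0 such that ∫ (f^{δ₀} + f^{−δ₀}) dη ≤ I₀ and ∫ log f dη ≥ L₀. Then there exists δ₁ > 0, depending only on (δ₀, I₀, L₀), such that for every 0 < δ ≤ δ₁ one has ∫ f^{−δ} dη ≤ 1 − (δ/2)·L₀ < 1. -/
/-!
Writing `f ^ (-δ) = exp (-δ log f)`, the second-order Taylor bound
`exp x ≤ 1 + x + x² exp |x|` gives `f ^ (-δ) ≤ 1 - δ log f + δ² (log f)² exp (δ |log f|)`.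
For `δ ≤ δ₀ / 2` the remainder is at most `(8 / δ₀²) δ² (f ^ δ₀ + f ^ (-δ₀))`, because
`x² ≤ 2 exp |x|` absorbs the square of the logarithm into half of the available exponential
moment. Integrating, `∫ f ^ (-δ) ≤ 1 - δ L₀ + (8 / δ₀²) I₀ δ²`, and the quadratic term is at
most `δ L₀ / 2` once `δ` is small in terms of `δ₀`, `I₀` and `L₀`.
-/

open MeasureTheory Real

namespace Real

lemma exp_le_one_add_add_sq_mul_exp_abs (x : ℝ) : exp x ≤ 1 + x + x ^ 2 * exp |x| := by
  have hmul : exp x ≤ 1 + x * exp x := by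
    have h := mul_le_mul_of_nonneg_right (one_sub_le_exp_neg x) (exp_pos x).le
    rw [← exp_add, neg_add_cancel, exp_zero, sub_mul, one_mul] at h
    linarith
  rcases le_or_gt 0 x with hx | hx
  · have := mul_le_mul_of_nonneg_left hmul hx
    rw [abs_of_nonneg hx]
    nlinarith
  · have := mul_le_mul_of_nonpos_left (add_one_le_exp x) hx.le
    have := mul_le_mul_of_nonneg_left (one_le_exp (abs_nonneg x)) (sq_nonneg x)
    nlinarith

lemma sq_le_two_mul_exp_abs (x : ℝ) : x ^ 2 ≤ 2 * exp |x| := by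
  have := quadratic_le_exp_of_nonneg (abs_nonneg x)
  rw [sq_abs] at this
  linarith [abs_nonneg x]

lemma sq_mul_exp_mul_abs_le {t δ δ₀ : ℝ} (hδ₀ : 0 < δ₀) (hδ : δ ≤ δ₀ / 2) :
    t ^ 2 * exp (δ * |t|) ≤ 8 / δ₀ ^ 2 * exp (δ₀ * |t|) := by
  have hsq : t ^ 2 ≤ 8 / δ₀ ^ 2 * exp (δ₀ / 2 * |t|) := by
    have h := sq_le_two_mul_exp_abs (δ₀ / 2 * t)
    rw [abs_mul, abs_of_pos (half_pos hδ₀)] at h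
    rw [div_mul_eq_mul_div, le_div_iff₀ (by positivity)]
    nlinarith
  calc t ^ 2 * exp (δ * |t|)
      ≤ 8 / δ₀ ^ 2 * exp (δ₀ / 2 * |t|) * exp (δ₀ / 2 * |t|) := by
        gcongr
    _ = 8 / δ₀ ^ 2 * exp (δ₀ * |t|) := by
        rw [mul_assoc, ← exp_add]
        ring_nf

lemma exp_mul_abs_log_le_rpow_add_rpow_neg {y a : ℝ} (hy : 0 < y) :
    exp (a * |log y|) ≤ y ^ a + y ^ (-a) := by
  rw [rpow_def_of_pos hy, rpow_def_of_pos hy]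
  rcases abs_choice (log y) with h | h <;> rw [h]
  · rw [mul_comm]
    linarith [exp_pos (log y * -a)]
  · rw [mul_neg, ← neg_mul, mul_comm]
    linarith [exp_pos (log y * a)]

lemma rpow_neg_le_rpow_add_rpow_neg {y δ δ₀ : ℝ} (hy : 0 < y) (hδ : 0 ≤ δ) (hδle : δ ≤ δ₀) :
    y ^ (-δ) ≤ y ^ δ₀ + y ^ (-δ₀) := by
  have hexp : log y * -δ ≤ δ₀ * |log y| := by
    nlinarith [neg_abs_le (log y), abs_nonneg (log y)]
  calc y ^ (-δ) = exp (log y * -δ) := rpow_def_of_pos hy _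
    _ ≤ exp (δ₀ * |log y|) := exp_le_exp.2 hexp
    _ ≤ y ^ δ₀ + y ^ (-δ₀) := exp_mul_abs_log_le_rpow_add_rpow_neg hy

lemma rpow_neg_le_one_sub_mul_log_add {y δ δ₀ : ℝ} (hy : 0 < y) (hδ₀ : 0 < δ₀) (hδ : 0 ≤ δ)
    (hδle : δ ≤ δ₀ / 2) :
    y ^ (-δ) ≤ 1 - δ * log y + δ ^ 2 * (8 / δ₀ ^ 2 * (y ^ δ₀ + y ^ (-δ₀))) := by
  calc y ^ (-δ) = exp (-(δ * log y)) := by rw [rpow_def_of_pos hy]; ring_nf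
    _ ≤ 1 + -(δ * log y) + (-(δ * log y)) ^ 2 * exp |-(δ * log y)| :=
        exp_le_one_add_add_sq_mul_exp_abs _
    _ = 1 - δ * log y + δ ^ 2 * (log y ^ 2 * exp (δ * |log y|)) := by
        rw [abs_neg, abs_mul, abs_of_nonneg hδ]
        ring
    _ ≤ 1 - δ * log y + δ ^ 2 * (8 / δ₀ ^ 2 * exp (δ₀ * |log y|)) := by
        gcongr _ + δ ^ 2 * ?_
        exact sq_mul_exp_mul_abs_le hδ₀ hδle
    _ ≤ 1 - δ * log y + δ ^ 2 * (8 / δ₀ ^ 2 * (y ^ δ₀ + y ^ (-δ₀))) := by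
        gcongr _ + δ ^ 2 * (_ * ?_)
        exact exp_mul_abs_log_le_rpow_add_rpow_neg hy

end Real

section Integral

variable {Ω : Type*} [MeasurableSpace Ω] {η : Measure Ω} {f : Ω → ℝ} {δ δ₀ : ℝ}

lemma integrable_rpow_neg_of_le (hf : AEMeasurable f η) (hfpos : ∀ᵐ ω ∂η, 0 < f ω)
    (hint : Integrable (fun ω => f ω ^ δ₀ + f ω ^ (-δ₀)) η) (hδ : 0 ≤ δ) (hδle : δ ≤ δ₀) :
    Integrable (fun ω => f ω ^ (-δ)) η := by
  refine hint.mono' (hf.pow_const _).aestronglyMeasurable ?_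
  filter_upwards [hfpos] with ω hω
  rw [norm_of_nonneg (rpow_nonneg hω.le _)]
  exact rpow_neg_le_rpow_add_rpow_neg hω hδ hδle

lemma integral_rpow_neg_le [IsProbabilityMeasure η] (hf : AEMeasurable f η)
    (hfpos : ∀ᵐ ω ∂η, 0 < f ω) (hδ₀ : 0 < δ₀)
    (hint : Integrable (fun ω => f ω ^ δ₀ + f ω ^ (-δ₀)) η)
    (hlogint : Integrable (fun ω => log (f ω)) η) (hδ : 0 ≤ δ) (hδle : δ ≤ δ₀ / 2) :
    ∫ ω, f ω ^ (-δ) ∂η ≤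
      1 - δ * ∫ ω, log (f ω) ∂η + δ ^ 2 * (8 / δ₀ ^ 2 * ∫ ω, (f ω ^ δ₀ + f ω ^ (-δ₀)) ∂η) := by
  have hlin : Integrable (fun ω => 1 - δ * log (f ω)) η :=
    (integrable_const 1).sub (hlogint.const_mul δ)
  have hquad : Integrable (fun ω => δ ^ 2 * (8 / δ₀ ^ 2 * (f ω ^ δ₀ + f ω ^ (-δ₀)))) η :=
    (hint.const_mul _).const_mul _
  calc ∫ ω, f ω ^ (-δ) ∂η
      ≤ ∫ ω, (1 - δ * log (f ω) + δ ^ 2 * (8 / δ₀ ^ 2 * (f ω ^ δ₀ + f ω ^ (-δ₀)))) ∂η := by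
        refine integral_mono_ae
          (integrable_rpow_neg_of_le hf hfpos hint hδ (by linarith)) (hlin.add hquad) ?_
        filter_upwards [hfpos] with ω hω
        exact rpow_neg_le_one_sub_mul_log_add hω hδ₀ hδ hδle
    _ = 1 - δ * ∫ ω, log (f ω) ∂η + δ ^ 2 * (8 / δ₀ ^ 2 * ∫ ω, (f ω ^ δ₀ + f ω ^ (-δ₀)) ∂η) := by
        rw [integral_add hlin hquad, integral_sub (integrable_const 1) (hlogint.const_mul δ),
          integral_const_mul, integral_const_mul, integral_const_mul, integral_const]
        simp

end Integral

theorem uniform_contraction_estimate {Ω : Type*} [MeasurableSpace Ω]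
    (η : Measure Ω) [IsProbabilityMeasure η]
    (f : Ω → ℝ) (hf : Measurable f) (hfpos : ∀ ω, 0 < f ω)
    (δ₀ I₀ L₀ : ℝ) (hδ₀ : 0 < δ₀) (hL₀ : 0 < L₀)
    (hint : Integrable (fun ω => f ω ^ δ₀ + f ω ^ (-δ₀)) η)
    (hI : (∫ ω, (f ω ^ δ₀ + f ω ^ (-δ₀)) ∂η) ≤ I₀)
    (hlogint : Integrable (fun ω => Real.log (f ω)) η)
    (hL : L₀ ≤ ∫ ω, Real.log (f ω) ∂η) :
    ∃ δ₁ > 0, ∀ δ : ℝ, 0 < δ → δ ≤ δ₁ →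
      (∫ ω, f ω ^ (-δ) ∂η) ≤ 1 - δ / 2 * L₀ ∧ 1 - δ / 2 * L₀ < 1 := by
  obtain ⟨M, hIM, hM⟩ : ∃ M, I₀ ≤ M ∧ 0 < M := ⟨max I₀ 1, le_max_left _ _, by positivity⟩
  set C := 8 / δ₀ ^ 2
  refine ⟨min (δ₀ / 2) (L₀ / (2 * C * M)), by positivity, fun δ hδ hδ₁ => ⟨?_, by nlinarith⟩⟩
  have hδCML : δ * (2 * C * M) ≤ L₀ :=
    (le_div_iff₀ (by positivity)).1 (hδ₁.trans (min_le_right _ _))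
  calc ∫ ω, f ω ^ (-δ) ∂η
      ≤ 1 - δ * ∫ ω, log (f ω) ∂η + δ ^ 2 * (C * ∫ ω, (f ω ^ δ₀ + f ω ^ (-δ₀)) ∂η) :=
        integral_rpow_neg_le hf.aemeasurable (.of_forall hfpos) hδ₀ hint hlogint hδ.le
          (hδ₁.trans (min_le_left _ _))
    _ ≤ 1 - δ * L₀ + δ ^ 2 * (C * M) := by gcongr; exact hI.trans hIM
    _ ≤ 1 - δ / 2 * L₀ := by nlinarith
end

section
/- Let η be a nonzero Radon measure on ℝ such that 0 ∈ supp(η) and η([−T, T])/T⁴ → 0 as T → ∞. Suppose u ∈ ℝ, u ≠ 0, and c > 0 are such that the pushforward of η under translation by u equals c·η (i.e. η(A − u) = c·η(A) for all Borel sets A). Then c = 1. -/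
/-!
Replacing `u` by `-u` and `c` by `c⁻¹` if necessary, we may assume `c > 1`. Iterating the relation
gives `η (I - n u) = cⁿ η I` for the interval `I = (-1, 1)`, so `η [-T, T]` grows exponentially along
`T = n |u| + 1`, whereas it is `o(T⁴)`; as `η I > 0`, this is impossible.
-/

open Asymptotics Filter Set MeasureTheory Measure
open scoped ENNReal Topology

theorem exists_lt_const_mul_pow_of_tendsto_div_pow {f : ℝ → ℝ} {k : ℕ}
    (hf : Tendsto (fun T => f T / T ^ k) atTop (𝓝 0)) {L R m r : ℝ} (hL : 0 < L) (hm : 0 < m)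
    (hr : 1 < r) : ∃ n : ℕ, f (n * L + R) < m * r ^ n := by
  have hT : Tendsto (fun n : ℕ => n * L + R) atTop atTop :=
    tendsto_atTop_add_const_right _ R (tendsto_natCast_atTop_atTop.atTop_mul_const hL)
  have hf_o : f =o[atTop] (· ^ k) :=
    (isLittleO_iff_tendsto' <| (eventually_gt_atTop 0).mono fun T hT0 h =>
      absurd h (pow_pos hT0 k).ne').2 hf
  have haffine : (fun x : ℝ => x * L + R) =O[atTop] id :=
    ((isBigO_const_mul_self L id atTop).congr_left fun _ => mul_comm _ _).add
      (isLittleO_const_id_atTop R).isBigO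
  have hpoly : (fun n : ℕ => ((n : ℝ) * L + R) ^ k) =o[atTop] (r ^ ·) :=
    ((haffine.comp_tendsto tendsto_natCast_atTop_atTop).pow k).trans_isLittleO
      (isLittleO_pow_const_const_pow_of_one_lt k hr)
  obtain ⟨n, hn⟩ := (((hf_o.comp_tendsto hT).trans hpoly).def (half_pos hm)).exists
  refine ⟨n, ?_⟩
  have hrn : 0 < r ^ n := pow_pos (zero_lt_one.trans hr) n
  simp only [Function.comp_apply, Real.norm_eq_abs, abs_of_pos hrn] at hn
  linarith [le_abs_self (f (n * L + R)), mul_pos hm hrn]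

namespace MeasureTheory.Measure

variable {G : Type*} [MeasurableSpace G]

theorem map_add_nsmul_eq_pow_smul [AddMonoid G] [MeasurableAdd G] {μ : Measure G} {g : G}
    {a : ℝ≥0∞} (h : map (· + g) μ = a • μ) (n : ℕ) : map (· + n • g) μ = a ^ n • μ := by
  induction n with
  | zero => simp
  | succ n ih =>
    calc map (· + (n + 1) • g) μ = map (· + g) (map (· + n • g) μ) := by
          rw [map_map (measurable_add_const g) (measurable_add_const _)]
          congr 1; funext x; simp [succ_nsmul, add_assoc]
      _ = a ^ (n + 1) • μ := by rw [ih, Measure.map_smul, h, smul_smul, pow_succ]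

theorem map_add_neg_eq_inv_smul [AddGroup G] [MeasurableAdd G] {μ : Measure G} {g : G}
    {a : ℝ≥0∞} (h : map (· + g) μ = a • μ) (ha₀ : a ≠ 0) (ha : a ≠ ∞) :
    map (· + -g) μ = a⁻¹ • μ := by
  have hcancel : map (· + -g) (map (· + g) μ) = μ := by
    rw [map_map (measurable_add_const _) (measurable_add_const g)]
    simp [Function.comp_def]
  rw [h, Measure.map_smul] at hcancel
  calc map (· + -g) μ = a⁻¹ • a • map (· + -g) μ := by
        rw [smul_smul, ENNReal.inv_mul_cancel ha₀ ha, one_smul]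
    _ = a⁻¹ • μ := by rw [hcancel]

theorem pow_mul_le_measure_Icc_of_map_add_eq_smul {μ : Measure ℝ} {v : ℝ} {a : ℝ≥0∞}
    (h : map (· + v) μ = a • μ) {s : Set ℝ} (hs : MeasurableSet s) (R : ℝ)
    (hsR : s ⊆ Icc (-R) R) (n : ℕ) :
    a ^ n * μ s ≤ μ (Icc (-(n * |v| + R)) (n * |v| + R)) := by
  have hmap := congrArg (· s) (map_add_nsmul_eq_pow_smul h n)
  simp only [map_apply (measurable_add_const _) hs, smul_apply, smul_eq_mul] at hmap
  rw [← hmap]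
  refine measure_mono fun x hx => ?_
  have hxR := hsR hx
  simp only [mem_Icc, nsmul_eq_mul] at hxR ⊢
  constructor <;> nlinarith [neg_abs_le v, le_abs_self v, (n.cast_nonneg : (0:ℝ) ≤ n)]

end MeasureTheory.Measure

theorem translation_quasi_invariance_forces_c_eq_one_general
    (η : Measure ℝ) [IsLocallyFiniteMeasure η]
    (hsupp : ∀ ε : ℝ, 0 < ε → 0 < η (Set.Ioo (-ε) ε))
    (hgrowth : Filter.Tendsto (fun T : ℝ => (η (Set.Icc (-T) T)).toReal / T ^ 4)
      Filter.atTop (nhds 0))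
    (u c : ℝ) (hu : u ≠ 0) (hc : 0 < c)
    (htrans : Measure.map (fun x => x + u) η = ENNReal.ofReal c • η) :
    c = 1 := by
  by_contra hc1
  obtain ⟨v, a, hv, ha, hmap⟩ :
      ∃ v a : ℝ, v ≠ 0 ∧ 1 < a ∧ map (· + v) η = ENNReal.ofReal a • η := by
    rcases lt_or_gt_of_ne hc1 with hlt | hgt
    · refine ⟨-u, c⁻¹, neg_ne_zero.2 hu, (one_lt_inv₀ hc).2 hlt, ?_⟩
      rw [ENNReal.ofReal_inv_of_pos hc]
      exact map_add_neg_eq_inv_smul htrans (ENNReal.ofReal_pos.2 hc).ne' ENNReal.ofReal_ne_top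
    · exact ⟨u, c, hu, hgt, htrans⟩
  have hm : η (Ioo (-1) 1) ≠ ∞ := measure_Ioo_lt_top.ne
  obtain ⟨n, hn⟩ := exists_lt_const_mul_pow_of_tendsto_div_pow hgrowth (R := 1) (abs_pos.2 hv)
    (ENNReal.toReal_pos (hsupp 1 one_pos).ne' hm) ha
  have hle := ENNReal.toReal_mono isCompact_Icc.measure_lt_top.ne
    (pow_mul_le_measure_Icc_of_map_add_eq_smul hmap measurableSet_Ioo 1 Ioo_subset_Icc_self n)
  rw [ENNReal.toReal_mul, ENNReal.toReal_pow, ENNReal.toReal_ofReal (by linarith)] at hle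
  linarith

theorem translation_quasi_invariance_forces_c_eq_one
    (η : Measure ℝ) [IsLocallyFiniteMeasure η] (hne : η ≠ 0)
    (hsupp : ∀ ε : ℝ, 0 < ε → 0 < η (Set.Ioo (-ε) ε))
    (hgrowth : Filter.Tendsto (fun T : ℝ => (η (Set.Icc (-T) T)).toReal / T ^ 4)
      Filter.atTop (nhds 0))
    (u c : ℝ) (hu : u ≠ 0) (hc : 0 < c)
    (htrans : Measure.map (fun x => x + u) η = ENNReal.ofReal c • η) :
    c = 1 :=
  translation_quasi_invariance_forces_c_eq_one_general η hsupp hgrowth u c hu hc htrans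
end
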